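/- Positivity of the HLLC intermediate states (Lemma 2.7): for any two admissible states U_L ∈ G and U_R ∈ G, the HLLC intermediate states satisfy U_{*L} ∈ G and U_{*R} ∈ G. -/

import Mathlib

noncomputable section

/-- A 1D state `U = (ρ, m, E)`. -/
abbrev St : Type := ℝ × ℝ × ℝ

/-- The admissible set `G = {(ρ, m, E) : ρ > 0, E − m²/(2ρ) > 0}`. -/
def admG : Set St := {U | 0 < U.1 ∧ 0 < U.2.2 - U.2.1 ^ 2 / (2 * U.1)}

/-- The velocity `u = m/ρ`. -/
def vel (U : St) : ℝ := U.2.1 / U.1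

/-- The pressure `p = (γ−1)(E − m²/(2ρ))`. -/
def press (γ : ℝ) (U : St) : ℝ := (γ - 1) * (U.2.2 - U.2.1 ^ 2 / (2 * U.1))

/-- The sound speed `√(γ p / ρ)`. -/
def sound (γ : ℝ) (U : St) : ℝ := Real.sqrt (γ * press γ U / U.1)

/-- The specific internal energy `e = (E − m²/(2ρ))/ρ`. -/
def specE (U : St) : ℝ := (U.2.2 - U.2.1 ^ 2 / (2 * U.1)) / U.1

/-- The Euler flux `F(U) = (ρu, ρu² + p, (E+p)u)`. -/
def eulerF (γ : ℝ) (U : St) : St :=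
  (U.1 * vel U, U.1 * vel U ^ 2 + press γ U, (U.2.2 + press γ U) * vel U)

/-- `α₋(U) = u − √(γp/ρ)`. -/
def alphaMinus (γ : ℝ) (U : St) : ℝ := vel U - sound γ U

/-- `α₊(U) = u + √(γp/ρ)`. -/
def alphaPlus (γ : ℝ) (U : St) : ℝ := vel U + sound γ U

/-- `α_max(U) = |u| + √(γp/ρ)`. -/
def alphaMax (γ : ℝ) (U : St) : ℝ := |vel U| + sound γ U

/-- Left wave speed `S_L = min(α₋(U_L), α₋(U_R))`. -/
def SL (γ : ℝ) (UL UR : St) : ℝ := min (alphaMinus γ UL) (alphaMinus γ UR)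

/-- Right wave speed `S_R = max(α₊(U_L), α₊(U_R))`. -/
def SR (γ : ℝ) (UL UR : St) : ℝ := max (alphaPlus γ UL) (alphaPlus γ UR)

/-- Middle wave speed `S_*`. -/
def Sstar (γ : ℝ) (UL UR : St) : ℝ :=
  (press γ UR - press γ UL + UL.1 * vel UL * (SL γ UL UR - vel UL)
      - UR.1 * vel UR * (SR γ UL UR - vel UR)) /
    (UL.1 * (SL γ UL UR - vel UL) - UR.1 * (SR γ UL UR - vel UR))

/-- HLLC intermediate state
`U_{*i} = ρ_i (S_i − u_i)/(S_i − S_*) · (1, S_*, E_i/ρ_i + (S_* − u_i)(S_* + p_i/(ρ_i(S_i − u_i))))`. -/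
def Ustar (γ : ℝ) (Si Sst : ℝ) (Ui : St) : St :=
  (Ui.1 * ((Si - vel Ui) / (Si - Sst))) •
    (((1 : ℝ), Sst,
      Ui.2.2 / Ui.1 + (Sst - vel Ui) * (Sst + press γ Ui / (Ui.1 * (Si - vel Ui)))) : St)

/-- Intermediate flux `F_{*i} = F(U_i) + S_i (U_{*i} − U_i)`. -/
def Fstar (γ : ℝ) (Si Sst : ℝ) (Ui : St) : St :=
  eulerF γ Ui + Si • (Ustar γ Si Sst Ui - Ui)

/-- The HLLC numerical flux. -/
def Fhllc (γ : ℝ) (UL UR : St) : St :=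
  if 0 ≤ SL γ UL UR then eulerF γ UL
  else if 0 ≤ Sstar γ UL UR then Fstar γ (SL γ UL UR) (Sstar γ UL UR) UL
  else if 0 ≤ SR γ UL UR then Fstar γ (SR γ UL UR) (Sstar γ UL UR) UR
  else eulerF γ UR

end

/-!
`U_{*i}` is a positive multiple `r • (1, S_*, X)` of a state whose specific internal energy is
`X - S_*²/2 = e + t²/2 + t k`, where `e` is the specific internal energy of `U_i`, `t = S_* - u_i`
and `k = p_i / (ρ_i (S_i - u_i))`. As a quadratic in `t` this is positive once `k² < 2e`, which
follows from `ρ_i (S_i - u_i)² ≥ γ p_i`, i.e. from `S_i` lying outside the acoustic fan of `U_i`.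
The multiple `r = ρ_i (S_i - u_i)/(S_i - S_*)` is positive because `S_L < S_* < S_R`; after clearing
the (negative) denominator of `S_*` this reduces to `p_R ≤ ρ_R (S_R - u_R)(u_R - S_L)` and its
mirror image, both consequences of `S_L ≤ u - c ≤ u + c ≤ S_R` for either state.
-/

lemma admG_smul {r : ℝ} {V : St} (hr : 0 < r) (hV : V ∈ admG) : r • V ∈ admG := by
  obtain ⟨hρ, he⟩ := hV
  refine ⟨mul_pos hr hρ, ?_⟩
  simp only [Prod.smul_fst, Prod.smul_snd, smul_eq_mul]
  have hscale : r * V.2.2 - (r * V.2.1) ^ 2 / (2 * (r * V.1)) =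
      r * (V.2.2 - V.2.1 ^ 2 / (2 * V.1)) := by
    field_simp
  rw [hscale]
  exact mul_pos hr he

lemma mk_one_mem_admG_iff (m E : ℝ) : ((1, m, E) : St) ∈ admG ↔ 0 < E - m ^ 2 / 2 := by
  simp [admG]

lemma energy_div_density {U : St} (hρ : U.1 ≠ 0) : U.2.2 / U.1 = specE U + vel U ^ 2 / 2 := by
  unfold specE vel
  field_simp
  ring

lemma specE_pos {U : St} (hU : U ∈ admG) : 0 < specE U := div_pos hU.2 hU.1

lemma press_pos {γ : ℝ} {U : St} (hγ : 1 < γ) (hU : U ∈ admG) : 0 < press γ U :=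
  mul_pos (sub_pos.mpr hγ) hU.2

lemma press_eq_mul_specE (γ : ℝ) {U : St} (hρ : U.1 ≠ 0) :
    press γ U = (γ - 1) * U.1 * specE U := by
  unfold press specE
  field_simp

lemma density_mul_sound_sq {γ : ℝ} {U : St} (hγ : 1 < γ) (hU : U ∈ admG) :
    U.1 * sound γ U ^ 2 = γ * press γ U := by
  have hρ := hU.1
  have hp := press_pos hγ hU
  rw [sound, Real.sq_sqrt (by positivity)]
  field_simp

lemma sound_pos {γ : ℝ} {U : St} (hγ : 1 < γ) (hU : U ∈ admG) : 0 < sound γ U := by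
  have hρ := hU.1
  have hp := press_pos hγ hU
  exact Real.sqrt_pos.mpr (by positivity)

lemma gamma_mul_press_le_of_sound_le {γ a b : ℝ} {U : St} (hγ : 1 < γ) (hU : U ∈ admG)
    (ha : sound γ U ≤ a) (hb : sound γ U ≤ b) : γ * press γ U ≤ U.1 * (a * b) := by
  rw [← density_mul_sound_sq hγ hU, sq]
  have hc := (sound_pos hγ hU).le
  exact mul_le_mul_of_nonneg_left (mul_le_mul ha hb hc (hc.trans ha)) hU.1.le

lemma sound_le_vel_sub_SL (γ : ℝ) (UL UR : St) :
    sound γ UL ≤ vel UL - SL γ UL UR ∧ sound γ UR ≤ vel UR - SL γ UL UR := by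
  unfold SL alphaMinus
  constructor <;> linarith [min_le_left (vel UL - sound γ UL) (vel UR - sound γ UR),
    min_le_right (vel UL - sound γ UL) (vel UR - sound γ UR)]

lemma sound_le_SR_sub_vel (γ : ℝ) (UL UR : St) :
    sound γ UL ≤ SR γ UL UR - vel UL ∧ sound γ UR ≤ SR γ UL UR - vel UR := by
  unfold SR alphaPlus
  constructor <;> linarith [le_max_left (vel UL + sound γ UL) (vel UR + sound γ UR),
    le_max_right (vel UL + sound γ UL) (vel UR + sound γ UR)]

section ContactSpeed

variable {ρL uL pL ρR uR pR sL sR : ℝ}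

lemma contact_speed_denom_neg (hρL : 0 < ρL) (hρR : 0 < ρR) (hL : sL < uL) (hR : uR < sR) :
    ρL * (sL - uL) - ρR * (sR - uR) < 0 := by
  nlinarith [mul_pos hρL (sub_pos.mpr hL), mul_pos hρR (sub_pos.mpr hR)]

lemma lt_contact_speed (hρL : 0 < ρL) (hρR : 0 < ρR) (hpL : 0 ≤ pL) (hL : sL < uL)
    (hR : uR < sR) (hpR : pR ≤ ρR * ((sR - uR) * (uR - sL))) :
    sL < (pR - pL + ρL * uL * (sL - uL) - ρR * uR * (sR - uR)) /
      (ρL * (sL - uL) - ρR * (sR - uR)) := by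
  rw [lt_div_iff_of_neg (contact_speed_denom_neg hρL hρR hL hR)]
  have hgap : pR - pL + ρL * uL * (sL - uL) - ρR * uR * (sR - uR) -
      sL * (ρL * (sL - uL) - ρR * (sR - uR)) =
      (pR - ρR * ((sR - uR) * (uR - sL))) - pL - ρL * (sL - uL) ^ 2 := by ring
  nlinarith [mul_pos hρL (pow_pos (sub_pos.mpr hL) 2)]

lemma contact_speed_lt (hρL : 0 < ρL) (hρR : 0 < ρR) (hpR : 0 ≤ pR) (hL : sL < uL)
    (hR : uR < sR) (hpL : pL ≤ ρL * ((uL - sL) * (sR - uL))) :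
    (pR - pL + ρL * uL * (sL - uL) - ρR * uR * (sR - uR)) /
      (ρL * (sL - uL) - ρR * (sR - uR)) < sR := by
  rw [div_lt_iff_of_neg (contact_speed_denom_neg hρL hρR hL hR)]
  have hgap : pR - pL + ρL * uL * (sL - uL) - ρR * uR * (sR - uR) -
      sR * (ρL * (sL - uL) - ρR * (sR - uR)) =
      pR + ρR * (sR - uR) ^ 2 - (pL - ρL * ((uL - sL) * (sR - uL))) := by ring
  nlinarith [mul_pos hρR (pow_pos (sub_pos.mpr hR) 2)]

end ContactSpeed

lemma add_sq_half_add_mul_pos {e t k : ℝ} (hk : k ^ 2 < 2 * e) : 0 < e + t ^ 2 / 2 + t * k := by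
  nlinarith [sq_nonneg (t + k)]

lemma sq_press_div_lt_two_mul_specE {γ w : ℝ} {U : St} (hγ : 1 < γ) (hU : U ∈ admG)
    (hw : γ * press γ U ≤ U.1 * w ^ 2) : (press γ U / (U.1 * w)) ^ 2 < 2 * specE U := by
  have hρ := hU.1
  have hp := press_pos hγ hU
  have he := specE_pos hU
  have hw0 : w ≠ 0 := by
    rintro rfl
    nlinarith
  rw [div_pow, div_lt_iff₀ (by positivity), press_eq_mul_specE γ hρ.ne']
  rw [press_eq_mul_specE γ hρ.ne'] at hw
  have hγe : 0 < γ * specE U := by positivity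
  nlinarith [mul_le_mul_of_nonneg_left hw (by positivity : (0 : ℝ) ≤ 2 * specE U * U.1),
    mul_pos (mul_pos hγe hρ) (mul_pos hρ he)]

lemma ustar_mem_admG {γ S s : ℝ} {U : St} (hγ : 1 < γ) (hU : U ∈ admG)
    (hsign : 0 < (S - vel U) / (S - s)) (hS : γ * press γ U ≤ U.1 * (S - vel U) ^ 2) :
    Ustar γ S s U ∈ admG := by
  apply admG_smul (mul_pos hU.1 hsign)
  rw [mk_one_mem_admG_iff, energy_div_density hU.1.ne']
  have hk := sq_press_div_lt_two_mul_specE hγ hU hS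
  convert add_sq_half_add_mul_pos (t := s - vel U) hk using 1
  ring

/-- Lemma 2.7: positivity of the HLLC intermediate states. -/
theorem hllc_intermediate_states_admissible (γ : ℝ) (hγ : 1 < γ)
    (UL UR : St) (hUL : UL ∈ admG) (hUR : UR ∈ admG) :
    Ustar γ (SL γ UL UR) (Sstar γ UL UR) UL ∈ admG ∧
      Ustar γ (SR γ UL UR) (Sstar γ UL UR) UR ∈ admG := by
  obtain ⟨hL_SL, hR_SL⟩ := sound_le_vel_sub_SL γ UL UR
  obtain ⟨hL_SR, hR_SR⟩ := sound_le_SR_sub_vel γ UL UR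
  have hSL : SL γ UL UR < vel UL := by linarith [sound_pos hγ hUL]
  have hSR : vel UR < SR γ UL UR := by linarith [sound_pos hγ hUR]
  have hpL := press_pos hγ hUL
  have hpR := press_pos hγ hUR
  have hSL_lt : SL γ UL UR < Sstar γ UL UR :=
    lt_contact_speed hUL.1 hUR.1 hpL.le hSL hSR <| (le_mul_of_one_le_left hpR.le hγ.le).trans
      (gamma_mul_press_le_of_sound_le hγ hUR hR_SR hR_SL)
  have hSR_gt : Sstar γ UL UR < SR γ UL UR :=
    contact_speed_lt hUL.1 hUR.1 hpR.le hSL hSR <| (le_mul_of_one_le_left hpL.le hγ.le).trans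
      (gamma_mul_press_le_of_sound_le hγ hUL hL_SL hL_SR)
  constructor
  · refine ustar_mem_admG hγ hUL (div_pos_of_neg_of_neg (by linarith) (by linarith)) ?_
    rw [← neg_sub, neg_sq, sq]
    exact gamma_mul_press_le_of_sound_le hγ hUL hL_SL hL_SL
  · refine ustar_mem_admG hγ hUR (div_pos (by linarith) (by linarith)) ?_
    rw [sq]
    exact gamma_mul_press_le_of_sound_le hγ hUR hR_SR hR_SR
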